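/- arXiv:2503.11542 — 8 statements merged into one kernel-verified Lean document; each statement's English description precedes it below -/
import Mathlib

section
/- Let p and r be primes and a, b positive integers such that p^a = r^b + 1. Then either (i) p = 2 and b = 1 (so r = 2^a - 1 is a Mersenne prime), or (ii) r = 2 and a = 1 (so p = 2^b + 1 is a Fermat prime), or (iii) p^a = 9. -/
open Finset

lemma natCast_zmod_two_of_odd {n : ℕ} (h : Odd n) : ((n : ZMod 2)) = 1 := by
  obtain ⟨k, rfl⟩ := h
  push_cast
  have h2 : (2 : ZMod 2) = 0 := by decide
  rw [h2]
  ring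

/-- Helper: a natural number that is odd and divides a power of two equals 1. -/
lemma odd_dvd_two_pow {S n : ℕ} (hS : ¬ 2 ∣ S) (hdvd : S ∣ 2 ^ n) : S = 1 := by
  obtain ⟨k, hk, rfl⟩ := (Nat.dvd_prime_pow Nat.prime_two).mp hdvd
  cases k with
  | zero => rfl
  | succ m => exact absurd ⟨2 ^ m, by ring⟩ hS

/-- Case r = 2 with a ≥ 2 : p odd prime, p^a = 2^b + 1 forces p^a = 9. -/
lemma aux_r2 (p a b : ℕ) (hp : p.Prime) (hpo : Odd p) (ha : 2 ≤ a)
    (h : p ^ a = 2 ^ b + 1) : p ^ a = 9 := by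
  have hp3 : 3 ≤ p := by
    rcases hpo with ⟨k, hk⟩
    have := hp.two_le
    omega
  rcases Nat.even_or_odd a with hae | hao
  · -- a even : p^a is a square
    obtain ⟨c, rfl⟩ := hae
    have hc : 1 ≤ c := by omega
    set x := p ^ c with hx
    have hx3 : 3 ≤ x := by
      calc 3 ≤ p := hp3
      _ = p ^ 1 := (pow_one p).symm
      _ ≤ p ^ c := Nat.pow_le_pow_right (by omega) hc
    have hxodd : Odd x := hpo.pow
    have hxx : x * x = 2 ^ b + 1 := by
      rw [← h, hx, ← pow_add]
    have hfac : (x - 1) * (x + 1) = 2 ^ b := by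
      have key : x * x = (x - 1) * (x + 1) + 1 := by
        obtain ⟨y, hy⟩ := Nat.exists_eq_add_of_le (show 1 ≤ x by omega)
        rw [hy]
        have h1 : 1 + y - 1 = y := by omega
        rw [h1]
        ring
      omega
    have hd1 : x - 1 ∣ 2 ^ b := ⟨x + 1, hfac.symm⟩
    have hd2 : x + 1 ∣ 2 ^ b := Dvd.intro_left _ hfac
    obtain ⟨s, hs, hseq⟩ := (Nat.dvd_prime_pow Nat.prime_two).mp hd1
    obtain ⟨t, ht, hteq⟩ := (Nat.dvd_prime_pow Nat.prime_two).mp hd2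
    have hst : 2 ^ t = 2 ^ s + 2 := by omega
    have hs1 : 1 ≤ s := by
      rcases hxodd with ⟨k, hk⟩
      by_contra hs0
      interval_cases s <;> omega
    have ht2 : 2 ≤ t := by
      by_contra ht1
      interval_cases t <;> omega
    have hs' : s = 1 := by
      by_contra hs2
      have h2s : 2 ≤ s := by omega
      have h4s : 4 ∣ 2 ^ s := by
        have : (2:ℕ) ^ 2 ∣ 2 ^ s := pow_dvd_pow 2 h2s
        simpa using this
      have h4t : 4 ∣ 2 ^ t := by
        have : (2:ℕ) ^ 2 ∣ 2 ^ t := pow_dvd_pow 2 ht2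
        simpa using this
      omega
    have hx3' : x = 3 := by
      have h4 : 2 ^ t = 4 := by rw [hst, hs']; norm_num
      have ht' : t = 2 := by
        rcases Nat.lt_trichotomy t 2 with h' | h' | h'
        · omega
        · exact h'
        · exfalso
          have : (2:ℕ) ^ 3 ∣ 2 ^ t := pow_dvd_pow 2 h'
          have h8 : (8:ℕ) ∣ 2 ^ t := by simpa using this
          omega
      omega
    have hp3' : p = 3 := by
      have : p ∣ 3 := hx3' ▸ dvd_pow_self p (by omega)
      have h3 : Nat.Prime 3 := by norm_num
      rcases (Nat.Prime.eq_one_or_self_of_dvd h3 p this) with h' | h'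
      · exact absurd h' hp.ne_one
      · exact h'
    have hc1 : c = 1 := by
      by_contra hc2
      have h2c : (3:ℕ) ^ 2 ≤ 3 ^ c := Nat.pow_le_pow_right (by norm_num) (by omega)
      have hx9 : 9 ≤ p ^ c := by rw [hp3']; simpa using h2c
      omega
    subst hp3' hc1
    norm_num
  · -- a odd ≥ 3 : geometric sum factor
    exfalso
    set S : ℕ := ∑ i ∈ range a, p ^ i with hSdef
    have hgeom : (S : ℤ) * ((p : ℤ) - 1) = (p : ℤ) ^ a - 1 := by
      rw [hSdef]
      push_cast
      exact geom_sum_mul (p : ℤ) a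
    have hSd : (S : ℤ) ∣ (2 : ℤ) ^ b := by
      refine ⟨(p : ℤ) - 1, ?_⟩
      rw [hgeom]
      have : ((p : ℤ)) ^ a = (2 : ℤ) ^ b + 1 := by exact_mod_cast h
      omega
    have hSdnat : S ∣ 2 ^ b := by
      have := Int.natAbs_dvd_natAbs.mpr hSd
      simpa [Int.natAbs_pow] using this
    have hSodd : ¬ 2 ∣ S := by
      intro hdvd
      have hz : ((S : ℕ) : ZMod 2) = 0 := (ZMod.natCast_eq_zero_iff S 2).mpr hdvd
      have hpz : ((p : ℕ) : ZMod 2) = 1 := natCast_zmod_two_of_odd hpo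
      have hone : ((S : ℕ) : ZMod 2) = 1 := by
        rw [hSdef]
        push_cast
        simp only [hpz, one_pow]
        rw [Finset.sum_const, card_range, nsmul_eq_mul, mul_one]
        exact natCast_zmod_two_of_odd hao
      rw [hz] at hone
      exact absurd hone (by decide)
    have hS1 : S = 1 := odd_dvd_two_pow hSodd hSdnat
    have hSge : 1 + p ≤ S := by
      have hsub : ({0, 1} : Finset ℕ) ⊆ range a := by
        intro i hi
        simp only [Finset.mem_insert, Finset.mem_singleton] at hi
        rcases hi with rfl | rfl <;> simp [Finset.mem_range] <;> omega
      have hle := Finset.sum_le_sum_of_subset (f := fun i => p ^ i) hsub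
      have heval : ∑ i ∈ ({0, 1} : Finset ℕ), p ^ i = 1 + p := by
        norm_num
      rw [heval] at hle
      exact hle
    omega

/-- Case p = 2 with b ≥ 2 : leads to contradiction. -/
lemma aux_p2 (r a b : ℕ) (hr : r.Prime) (hro : Odd r) (hb : 2 ≤ b) (ha : 0 < a)
    (h : 2 ^ a = r ^ b + 1) : False := by
  have hr3 : 3 ≤ r := by
    rcases hro with ⟨k, hk⟩
    have := hr.two_le
    omega
  rcases Nat.even_or_odd b with hbe | hbo
  · -- b even: r^b ≡ 1 mod 4
    obtain ⟨c, rfl⟩ := hbe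
    have hc : 1 ≤ c := by omega
    have hxodd : Odd (r ^ c) := hro.pow
    rcases hxodd with ⟨k, hk⟩
    have hmod : r ^ (c + c) % 4 = 1 := by
      have h1 : r ^ (c + c) = (r ^ c) * (r ^ c) := by rw [← pow_add]
      rw [h1, hk]
      have : (2 * k + 1) * (2 * k + 1) = 4 * (k * k + k) + 1 := by ring
      omega
    have ha2 : 2 ≤ a := by
      by_contra ha1
      have hb9 : 9 ≤ r ^ (c + c) := by
        calc (9:ℕ) = 3 ^ 2 := by norm_num
        _ ≤ r ^ 2 := Nat.pow_le_pow_left hr3 2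
        _ ≤ r ^ (c + c) := Nat.pow_le_pow_right (by omega) (by omega)
      interval_cases a <;> omega
    have h4 : 4 ∣ 2 ^ a := by
      have : (2:ℕ) ^ 2 ∣ 2 ^ a := pow_dvd_pow 2 ha2
      simpa using this
    omega
  · -- b odd ≥ 3 : geometric sum ∑ r^i (-1)^(b-1-i)
    set S : ℤ := ∑ i ∈ range b, (r : ℤ) ^ i * (-1 : ℤ) ^ (b - 1 - i) with hSdef
    have hgeom : S * ((r : ℤ) + 1) = (r : ℤ) ^ b + 1 := by
      have hg := geom_sum₂_mul (r : ℤ) (-1) b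
      rw [← hSdef] at hg
      rw [hbo.neg_one_pow] at hg
      simpa [sub_neg_eq_add] using hg
    have hcast : ((r : ℤ)) ^ b + 1 = (2 : ℤ) ^ a := by exact_mod_cast h.symm
    have hSd : S ∣ (2 : ℤ) ^ a := ⟨(r : ℤ) + 1, by rw [← hcast, ← hgeom]⟩
    have hSodd : ¬ (2 : ℤ) ∣ S := by
      intro hdvd
      have hz : ((S : ℤ) : ZMod 2) = 0 :=
        (ZMod.intCast_zmod_eq_zero_iff_dvd S 2).mpr (by exact_mod_cast hdvd)
      have hrz : ((r : ℕ) : ZMod 2) = 1 := natCast_zmod_two_of_odd hro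
      have hone : ((S : ℤ) : ZMod 2) = 1 := by
        rw [hSdef]
        push_cast
        simp only [hrz, one_pow]
        have hterm : ∀ i ∈ range b, (1 : ZMod 2) * (-1 : ZMod 2) ^ (b - 1 - i) = 1 := by
          intro i _
          have hneg : (-1 : ZMod 2) = 1 := by decide
          simp [hneg]
        rw [Finset.sum_congr rfl hterm, Finset.sum_const, card_range, nsmul_eq_mul, mul_one]
        exact natCast_zmod_two_of_odd hbo
      rw [hz] at hone
      exact absurd hone (by decide)
    have hSnat : S.natAbs ∣ 2 ^ a := by
      have := Int.natAbs_dvd_natAbs.mpr hSd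
      simpa [Int.natAbs_pow] using this
    have hSnodd : ¬ 2 ∣ S.natAbs := by
      intro hdvd
      apply hSodd
      have h2 : (2:ℤ).natAbs ∣ S.natAbs := by simpa using hdvd
      exact Int.natAbs_dvd_natAbs.mp h2
    have hS1 : S.natAbs = 1 := odd_dvd_two_pow hSnodd hSnat
    have hSval : S = 1 ∨ S = -1 := by
      rcases Int.natAbs_eq S with he | he <;> rw [hS1] at he
      · left; exact_mod_cast he
      · right; exact_mod_cast he
    have hbig : (r : ℤ) + 1 < (r : ℤ) ^ b + 1 := by
      have hlt : (r : ℤ) ^ 1 < (r : ℤ) ^ b := by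
        apply pow_lt_pow_right₀ (by exact_mod_cast (by omega : 1 < r)) (by omega)
      simpa using hlt
    rcases hSval with h1 | h1
    · rw [h1, one_mul] at hgeom; omega
    · rw [h1] at hgeom
      have hpow : (0 : ℤ) < (r : ℤ) ^ b := by positivity
      have hrnn : (0 : ℤ) ≤ (r : ℤ) := Nat.cast_nonneg r
      linarith [hgeom]

theorem stmt_0 (p r a b : ℕ) (hp : p.Prime) (hr : r.Prime) (ha : 0 < a) (hb : 0 < b)
    (h : p ^ a = r ^ b + 1) :
    (p = 2 ∧ b = 1) ∨ (r = 2 ∧ a = 1) ∨ p ^ a = 9 := by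
  have hne : p = 2 ∨ r = 2 := by
    by_contra hc
    push_neg at hc
    have hpo : Odd p := hp.odd_of_ne_two hc.1
    have hro : Odd r := hr.odd_of_ne_two hc.2
    have h1 : Odd (p ^ a) := hpo.pow
    have h2 : Even (r ^ b + 1) := (hro.pow).add_one
    rw [h] at h1
    exact (Nat.not_even_iff_odd.mpr h1) h2
  rcases hne with rfl | rfl
  · -- p = 2
    have hrne : r ≠ 2 := by
      rintro rfl
      have h1 : Even ((2:ℕ) ^ a) := Nat.even_pow.mpr ⟨even_two, by omega⟩
      have h2 : Odd ((2:ℕ) ^ b + 1) := (Nat.even_pow.mpr ⟨even_two, by omega⟩).add_one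
      rw [h] at h1
      exact (Nat.not_even_iff_odd.mpr h2) h1
    have hro : Odd r := hr.odd_of_ne_two hrne
    left
    refine ⟨rfl, ?_⟩
    by_contra hb1
    exact aux_p2 r a b hr hro (by omega) ha h
  · -- r = 2
    have hpne : p ≠ 2 := by
      rintro rfl
      have h1 : Even ((2:ℕ) ^ a) := Nat.even_pow.mpr ⟨even_two, by omega⟩
      have h2 : Odd ((2:ℕ) ^ b + 1) := (Nat.even_pow.mpr ⟨even_two, by omega⟩).add_one
      rw [h] at h1
      exact (Nat.not_even_iff_odd.mpr h2) h1
    have hpo : Odd p := hp.odd_of_ne_two hpne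
    by_cases ha1 : a = 1
    · exact Or.inr (Or.inl ⟨rfl, ha1⟩)
    · exact Or.inr (Or.inr (aux_r2 p a b hp hpo (by omega) h))
end

section
/- Suppose n is an odd positive integer with n > 1, q ≥ 2 is an integer, and (q^n + 1)/(q + 1) is a power of a prime p (i.e., equals p^l for some prime p and integer l ≥ 1). Then n is prime. -/
/-!
If `n = r a` with `r` the least prime factor of `n` and `a > 1`, put `x = q ^ a`. Then
`(q ^ n + 1) / (q + 1)` is the product of `m = (x + 1) / (q + 1)` and the cofactor
`c = (x ^ r + 1) / (x + 1) = ∑ x ^ i (-1) ^ (r - 1 - i)`, both larger than `1`. If the product is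
a power of `p`, then `p` divides `m`, hence `x + 1`, and `c`. Modulo `x + 1` the cofactor is
congruent to `r`, so `p = r`, and lifting the exponent gives `v_r(c) = v_r(r) = 1`, i.e. `c = r`.
This is impossible, since `r ≤ x + 1` makes `(x + 1) r` much smaller than `x ^ r + 1`.
-/

open Finset

section Cofactor

variable {x r c : ℕ}

theorem cofactor_eq_geom_sum₂ (hr : Odd r) (hc : x ^ r + 1 = (x + 1) * c) :
    (c : ℤ) = ∑ i ∈ range r, (x : ℤ) ^ i * (-1) ^ (r - 1 - i) := by
  have hx : ((x : ℤ) + 1) ≠ 0 := by positivity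
  apply mul_left_cancel₀ hx
  have := geom_sum₂_mul (x : ℤ) (-1) r
  rw [hr.neg_one_pow, sub_neg_eq_add, sub_neg_eq_add] at this
  rw [mul_comm _ (∑ i ∈ range r, _), this]
  exact_mod_cast hc.symm

theorem dvd_exponent_of_dvd_cofactor {d : ℕ} (hr : Odd r)
    (hc : x ^ r + 1 = (x + 1) * c) (hdx : d ∣ x + 1) (hdc : d ∣ c) : d ∣ r := by
  have hdx' : (d : ℤ) ∣ (x : ℤ) - (-1) := by rw [sub_neg_eq_add]; exact_mod_cast hdx
  have hdc' : (d : ℤ) ∣ c := Int.natCast_dvd_natCast.mpr hdc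
  rw [cofactor_eq_geom_sum₂ hr hc, dvd_geom_sum₂_iff_of_dvd_sub hdx',
    (Nat.Odd.sub_odd hr odd_one).neg_one_pow, mul_one] at hdc'
  exact Int.natCast_dvd_natCast.mp hdc'

theorem padicValNat_cofactor {p : ℕ} [Fact p.Prime] (hp : Odd p) (hr : Odd r)
    (hc : x ^ r + 1 = (x + 1) * c) (hpx : p ∣ x + 1) :
    padicValNat p c = padicValNat p r := by
  have hpx' : ¬p ∣ x := fun h ↦ (Fact.out : p.Prime).one_lt.ne'
    (Nat.dvd_one.mp ((Nat.dvd_add_right h).mp hpx))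
  have hc0 : c ≠ 0 := by rintro rfl; simp at hc
  have := padicValNat.pow_add_pow hp hpx hpx' hr
  rw [one_pow, hc, padicValNat.mul (by omega) hc0] at this
  omega

end Cofactor

theorem mul_lt_pow_add_one {x r : ℕ} (hx : 3 ≤ x) (hr : 3 ≤ r) (hrx : r ≤ x + 1) :
    (x + 1) * r < x ^ r + 1 :=
  calc (x + 1) * r ≤ (x + 1) * (x + 1) := Nat.mul_le_mul_left _ hrx
    _ < x ^ 3 + 1 := by nlinarith
    _ ≤ x ^ r + 1 := by gcongr; omega

theorem pow_mul_add_one_ne_mul_prime_pow {q r a p l : ℕ} (hq : 2 ≤ q) (hr : r.Prime)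
    (hr_odd : Odd r) (ha : 1 < a) (ha_odd : Odd a) (hp : p.Prime) :
    q ^ (r * a) + 1 ≠ (q + 1) * p ^ l := by
  intro h
  set x := q ^ a
  obtain ⟨m, hm⟩ := Odd.nat_add_dvd_pow_add_pow q 1 ha_odd
  obtain ⟨c, hc⟩ := Odd.nat_add_dvd_pow_add_pow x 1 hr_odd
  rw [one_pow] at hm hc
  have hqx : q < x := by simpa using Nat.pow_lt_pow_right hq ha
  have hx3 : 3 ≤ x := by omega
  have hr3 : 3 ≤ r := by have := hr.two_le; rcases hr_odd with ⟨k, rfl⟩; omega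
  have hm1 : m ≠ 1 := by rintro rfl; omega
  have hc1 : c ≠ 1 := by
    rintro rfl
    have : x < x ^ r := by simpa using Nat.pow_lt_pow_right (by omega : 1 < x) (by omega : 1 < r)
    omega
  have hmc : m * c = p ^ l := by
    apply Nat.eq_of_mul_eq_mul_left (Nat.succ_pos q)
    rw [← h, ← mul_assoc, ← hm, ← hc, pow_mul']
  obtain ⟨t, -, rfl⟩ := (Nat.dvd_prime_pow hp).mp (Dvd.intro c hmc)
  obtain ⟨s, -, rfl⟩ := (Nat.dvd_prime_pow hp).mp (Dvd.intro_left _ hmc)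
  have ht : t ≠ 0 := by rintro rfl; simp at hm1
  have hs : s ≠ 0 := by rintro rfl; simp at hc1
  have hpx : p ∣ x + 1 := hm ▸ (dvd_pow_self p ht).mul_left _
  obtain rfl : p = r := (Nat.prime_dvd_prime_iff_eq hp hr).mp
    (dvd_exponent_of_dvd_cofactor hr_odd hc hpx (dvd_pow_self p hs))
  have := Fact.mk hp
  have hs1 : s = 1 := by
    simpa [padicValNat.prime_pow, padicValNat_self] using padicValNat_cofactor hr_odd hr_odd hc hpx
  rw [hs1, pow_one] at hc
  exact (mul_lt_pow_add_one hx3 hr3 (Nat.le_of_dvd (by omega) hpx)).ne' hc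

theorem stmt_1 (n q : ℕ) (hn : 1 < n) (hodd : Odd n) (hq : 2 ≤ q)
    (h : ∃ p l : ℕ, p.Prime ∧ 1 ≤ l ∧ q ^ n + 1 = (q + 1) * p ^ l) :
    n.Prime := by
  by_contra hn_prime
  obtain ⟨p, l, hp, -, h⟩ := h
  have hr : n.minFac.Prime := Nat.minFac_prime (by omega)
  obtain ⟨a, hn_eq⟩ := Nat.minFac_dvd n
  have ha : 1 < a := by
    rcases a with _ | _ | a
    · omega
    · exact absurd (Nat.prime_def_minFac.mpr ⟨hn, (mul_one n.minFac ▸ hn_eq).symm⟩) hn_prime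
    · omega
  rw [hn_eq] at hodd h
  exact pow_mul_add_one_ne_mul_prime_pow hq hr (Nat.Odd.of_mul_left hodd) ha
    (Nat.Odd.of_mul_right hodd) hp h
end

section
/- Let A be a finite abelian group and χ the character of a finite-dimensional complex representation of A which is constant on A ∖ {1} and whose kernel is not all of A. Then there exist an integer m > 0 and an integer c such that χ = m·ρ + c·1_A, where ρ is the regular character of A (ρ(1) = |A|, ρ(a) = 0 for a ≠ 1) and 1_A is the trivial character. Moreover, for every proper subgroup B of A, every irreducible character of B occurs as a constituent of the restriction χ|_B. -/
/-!
Let `c` be the value of `χ` off the identity. For a linear character `ψ` of `A`, the sum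
`∑ a, χ a * ψ a⁻¹` is `|A|` times the multiplicity of `ψ` in `χ`, and it equals `χ(1) - c` if
`ψ ≠ 1` and `χ(1) - c + c·|A|` if `ψ = 1`. Hence `χ(1) - c = m·|A|` and `c = n - m` with
`m, n ∈ ℕ`; a character `ψ ≠ 1` exists because the kernel is proper, and it forces `m > 0`.
On a proper subgroup `B`, the sum `∑ b, χ b * conj (ψ b)` for a linear character `ψ` of `B` is
`m·|A|` or `m·|A| + c·|B|`, and the latter is at least `m·(|A| - |B|) > 0` because `c ≥ -m`.
-/

open scoped Classical

namespace Representation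

variable {k G W : Type*} [Field k]

/-- The one-dimensional representation of `G` on `k` in which `g` acts by `ψ g`. -/
noncomputable def ofUnitsHom [Monoid G] (ψ : G →* kˣ) : Representation k G k :=
  (Algebra.lmul k k).toMonoidHom.comp ((Units.coeHom k).comp ψ)

@[simp]
theorem char_ofUnitsHom [Monoid G] (ψ : G →* kˣ) (g : G) :
    (ofUnitsHom ψ).character g = ψ g :=
  Algebra.trace_self_apply (ψ g : k)

theorem exists_sum_char_mul_inv_eq_card_mul [Group G] [Fintype G] [NeZero (Nat.card G : k)]
    [AddCommGroup W] [Module k W] [FiniteDimensional k W] (ρ : Representation k G W)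
    (ψ : G →* kˣ) : ∃ n : ℕ, ∑ g, ρ.character g * ψ g⁻¹ = Nat.card G * n := by
  have : Invertible (Nat.card G : k) := invertibleOfNonzero (NeZero.ne _)
  refine ⟨Module.finrank k (IntertwiningMap (ofUnitsHom ψ) ρ), ?_⟩
  rw [← card_inv_mul_sum_char_mul_char_eq_finrank, mul_inv_cancel_left₀ (NeZero.ne _)]
  simp

end Representation

theorem sum_units_hom_apply_inv {k G : Type*} [Field k] [Group G] [Fintype G] (ψ : G →* kˣ) :
    ∑ g, (ψ g⁻¹ : k) = if ψ = 1 then (Fintype.card G : k) else 0 := by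
  have hcoe : (Units.coeHom k).comp ψ = 1 ↔ ψ = 1 := by
    rw [← MonoidHom.comp_one (Units.coeHom k), MonoidHom.cancel_left Units.val_injective]
  calc ∑ g, (ψ g⁻¹ : k) = ∑ g, (Units.coeHom k).comp ψ g :=
        Fintype.sum_equiv (Equiv.inv G) _ _ fun _ => rfl
    _ = _ := by simp only [sum_hom_units, hcoe]; push_cast; rfl

theorem Fintype.sum_mul_of_forall_ne_eq {ι R : Type*} [Fintype ι] [CommRing R]
    {f : ι → R} {i : ι} {c : R} (hf : ∀ j ≠ i, f j = c) (φ : ι → R) :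
    ∑ j, f j * φ j = (f i - c) * φ i + c * ∑ j, φ j := by
  have hsplit : ∀ j, f j * φ j = (f j - c) * φ j + c * φ j := fun _ => by ring
  simp_rw [hsplit, Finset.sum_add_distrib, ← Finset.mul_sum]
  rw [Fintype.sum_eq_single i fun j hj => by rw [hf j hj, sub_self, zero_mul]]

theorem Subgroup.card_lt_card_group_of_ne_top {G : Type*} [Group G] [Fintype G]
    {H : Subgroup G} (hH : H ≠ ⊤) : Fintype.card H < Fintype.card G := by
  simp only [← Nat.card_eq_fintype_card]
  exact lt_of_le_of_ne H.card_le_card_group (mt H.card_eq_iff_eq_top.1 hH)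

namespace FDRep

universe u

variable {k G : Type u} [Field k]

theorem exists_char_one_sub_add_eq_card_mul [Group G] [Fintype G] [NeZero (Nat.card G : k)]
    (V : FDRep k G) {c : k} (hc : ∀ g ≠ 1, V.character g = c) (ψ : G →* kˣ) :
    ∃ n : ℕ, V.character 1 - c + c * (if ψ = 1 then (Fintype.card G : k) else 0)
      = Fintype.card G * n := by
  obtain ⟨n, hn⟩ := Representation.exists_sum_char_mul_inv_eq_card_mul V.ρ ψ
  refine ⟨n, ?_⟩
  calc V.character 1 - c + c * (if ψ = 1 then (Fintype.card G : k) else 0)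
      = ∑ g, V.character g * (ψ g⁻¹ : k) := by
        rw [Fintype.sum_mul_of_forall_ne_eq hc, ← sum_units_hom_apply_inv]
        simp
    _ = Fintype.card G * n := by rw [← Nat.card_eq_fintype_card]; exact hn

theorem exists_char_eq_regular_add_trivial [CharZero k] [CommGroup G] [Fintype G]
    [HasEnoughRootsOfUnity k (Monoid.exponent G)] (V : FDRep k G)
    (hconst : ∀ g g' : G, g ≠ 1 → g' ≠ 1 → V.character g = V.character g')
    (hker : ∃ g : G, V.character g ≠ V.character 1) :
    ∃ m c : ℤ, 0 < m ∧ -m ≤ c ∧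
      ∀ g, V.character g = m * (if g = 1 then (Fintype.card G : k) else 0) + c := by
  obtain ⟨g₀, hg₀⟩ := hker
  have hg₀1 : g₀ ≠ 1 := by rintro rfl; exact hg₀ rfl
  have hc : ∀ g ≠ 1, V.character g = V.character g₀ := fun g hg => hconst g g₀ hg hg₀1
  obtain ⟨ψ, hψ⟩ := CommGroup.exists_apply_ne_one_of_hasEnoughRootsOfUnity G k hg₀1
  have hψ1 : ψ ≠ 1 := fun h => hψ (by rw [h, MonoidHom.one_apply])
  obtain ⟨m, hm⟩ := V.exists_char_one_sub_add_eq_card_mul hc ψ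
  obtain ⟨n, hn⟩ := V.exists_char_one_sub_add_eq_card_mul hc 1
  rw [if_neg hψ1, mul_zero, add_zero] at hm
  rw [if_pos rfl] at hn
  have hm0 : m ≠ 0 := by
    rintro rfl
    exact hg₀ (by linear_combination -hm)
  have hcard : (Fintype.card G : k) ≠ 0 := Nat.cast_ne_zero.2 Fintype.card_ne_zero
  have hc_eq : V.character g₀ = n - m :=
    mul_left_cancel₀ hcard (by linear_combination hn - hm)
  refine ⟨m, n - m, by omega, by omega, fun g => ?_⟩
  rcases eq_or_ne g 1 with rfl | hg
  · rw [if_pos rfl]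
    push_cast
    linear_combination hm + hc_eq
  · rw [if_neg hg, hc g hg, hc_eq]
    push_cast
    ring

end FDRep

theorem sum_regular_add_const_mul_hom_ne_zero {G R : Type*} [Group G] [Fintype G] [CommRing R]
    [IsDomain R] [CharZero R] {H : Subgroup G} (hH : H ≠ ⊤) (θ : H →* R) {m c : ℤ}
    (hm : 0 < m) (hc : -m ≤ c) :
    ∑ h : H, ((m : R) * (if (h : G) = 1 then (Fintype.card G : R) else 0) + c) * θ h ≠ 0 := by
  rw [Fintype.sum_mul_of_forall_ne_eq (i := 1) (c := (c : R)) (fun h hh => by simp [hh]),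
    sum_hom_units]
  have hk : (if θ = 1 then Fintype.card H else 0) < Fintype.card G := by
    split_ifs
    exacts [Subgroup.card_lt_card_group_of_ne_top hH, Fintype.card_pos]
  generalize (if θ = 1 then Fintype.card H else 0) = k at hk ⊢
  have hpos : 0 < m * Fintype.card G + c * k := by
    nlinarith [mul_le_mul_of_nonneg_right hc (Nat.cast_nonneg (α := ℤ) k)]
  simp only [OneMemClass.coe_one, if_pos, map_one, mul_one, add_sub_cancel_right]
  exact_mod_cast hpos.ne'

/-- if the character `χ` of a complex representation of a finite abelian
group `A` is constant on `A ∖ {1}` and its kernel is not all of `A`, then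
`χ = m·ρ_A^reg + c·1_A` with `m > 0`, and for every proper subgroup `B` every
irreducible character (i.e. linear character, as `B` is abelian) of `B` occurs in `χ|_B`. -/
theorem stmt_2 {A : Type} [CommGroup A] [Fintype A] (V : FDRep ℂ A)
    (hconst : ∀ a a' : A, a ≠ 1 → a' ≠ 1 → V.character a = V.character a')
    (hker : ∃ a : A, V.character a ≠ V.character 1) :
    (∃ m c : ℤ, 0 < m ∧
        ∀ a : A, V.character a
          = (m : ℂ) * (if a = 1 then (Fintype.card A : ℂ) else 0) + (c : ℂ)) ∧
      ∀ B : Subgroup A, B ≠ ⊤ → ∀ ψ : B →* ℂˣ,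
        ∑ b : B, V.character (b : A) * (starRingEnd ℂ) (ψ b : ℂ) ≠ 0 := by
  obtain ⟨m, c, hm, hc, hχ⟩ := V.exists_char_eq_regular_add_trivial hconst hker
  refine ⟨⟨m, c, hm, hχ⟩, fun B hB ψ => ?_⟩
  simp_rw [hχ]
  exact sum_regular_add_const_mul_hom_ne_zero hB
    ((starRingEnd ℂ).toMonoidHom.comp ((Units.coeHom ℂ).comp ψ)) hm hc
end

section
/- For every integer q ≥ 2, the integer (q^7 + 1)/gcd(2, q + 1) is not a prime power, i.e., it is not of the form p^l for any prime p and integer l ≥ 1. -/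
theorem stmt_6 (q : ℕ) (hq : 2 ≤ q) :
    ¬ ∃ p l : ℕ, p.Prime ∧ 1 ≤ l ∧ q ^ 7 + 1 = Nat.gcd 2 (q + 1) * p ^ l := by
  rintro ⟨p, l, hp, hl, heq⟩
  obtain ⟨r, rfl⟩ : ∃ r, q = r + 2 := ⟨q - 2, by omega⟩
  -- B is the cofactor: q^7+1 = (q+1) * B
  obtain ⟨B, hBdef⟩ : ∃ B : ℕ,
      B = (r + 2) ^ 5 * (r + 1) + (r + 2) ^ 3 * (r + 1) + (r + 2) * (r + 1) + 1 := ⟨_, rfl⟩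
  have hBmul : (r + 3) * B = (r + 2) ^ 7 + 1 := by rw [hBdef]; ring
  have h5 : 32 ≤ (r + 2) ^ 5 := by
    calc (32 : ℕ) = 2 ^ 5 := by norm_num
    _ ≤ (r + 2) ^ 5 := Nat.pow_le_pow_left (by omega) 5
  have h3 : 8 ≤ (r + 2) ^ 3 := by
    calc (8 : ℕ) = 2 ^ 3 := by norm_num
    _ ≤ (r + 2) ^ 3 := Nat.pow_le_pow_left (by omega) 3
  have hB43 : 43 ≤ B := by
    rw [hBdef]
    nlinarith
  -- B is odd
  have hBodd : ¬ 2 ∣ B := by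
    obtain ⟨k, hk⟩ := Nat.even_mul_succ_self (r + 1)
    have hfact : B = (r + 1) * (r + 1 + 1) * ((r + 2) ^ 4 + (r + 2) ^ 2 + 1) + 1 := by
      rw [hBdef]; ring
    rw [hk] at hfact
    obtain ⟨M, hM⟩ : ∃ M, B = 2 * M + 1 :=
      ⟨k * ((r + 2) ^ 4 + (r + 2) ^ 2 + 1), by rw [hfact]; ring⟩
    omega
  -- the gcd divides 2
  have hg : Nat.gcd 2 (r + 2 + 1) ∣ 2 := Nat.gcd_dvd_left _ _
  obtain ⟨c, hc⟩ := hg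
  -- (r+3) and B both divide 2 * p^l
  have hdvd2 : (r + 2) ^ 7 + 1 ∣ 2 * p ^ l := by
    refine ⟨c, ?_⟩
    rw [heq]
    conv_lhs => rw [hc]
    ring
  have hBdvd : B ∣ p ^ l := by
    have h1 : B ∣ 2 * p ^ l := dvd_trans ⟨r + 3, by linarith [hBmul]⟩ hdvd2
    have hcop : Nat.Coprime B 2 := by
      rw [Nat.coprime_two_right, Nat.odd_iff]; omega
    exact (Nat.Coprime.dvd_of_dvd_mul_left hcop h1)
  -- B = p^k with k ≥ 2 would be needed; first p ∣ B
  obtain ⟨k, hkl, hBk⟩ := (Nat.dvd_prime_pow hp).mp hBdvd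
  have hk1 : 1 ≤ k := by
    rcases Nat.eq_zero_or_pos k with h | h
    · rw [h, pow_zero] at hBk; omega
    · exact h
  have hpB : p ∣ B := hBk ▸ dvd_pow_self p (by omega : k ≠ 0)
  -- p divides r + 3
  have hr3dvd : (r + 3) ∣ 2 * p ^ l :=
    dvd_trans ⟨B, hBmul.symm⟩ hdvd2
  have hpr3 : p ∣ r + 3 := by
    by_contra hnd
    have hcop : Nat.Coprime (r + 3) (p ^ l) :=
      Nat.Coprime.pow_right l ((hp.coprime_iff_not_dvd.mpr hnd).symm)
    have h2 : (r + 3) ∣ 2 := hcop.dvd_of_dvd_mul_right hr3dvd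
    have := Nat.le_of_dvd (by norm_num) h2
    omega
  -- hence p ∣ 7, so p = 7
  have hident : B = (r + 3) * (12 + 41 * r + 46 * r ^ 2 + 27 * r ^ 3 + 8 * r ^ 4 + r ^ 5) + 7 := by
    rw [hBdef]; ring
  have h7 : p ∣ 7 := by
    have h1 : p ∣ (r + 3) * (12 + 41 * r + 46 * r ^ 2 + 27 * r ^ 3 + 8 * r ^ 4 + r ^ 5) :=
      hpr3.mul_right _
    have h2 := Nat.dvd_sub hpB h1
    rwa [hident, Nat.add_sub_cancel_left] at h2
  have hp7 : p = 7 := (Nat.prime_dvd_prime_iff_eq hp (by norm_num)).mp h7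
  subst hp7
  -- so 7 ∣ r + 3, write r = 7s + 4
  obtain ⟨m, hm⟩ := hpr3
  obtain ⟨s, rfl⟩ : ∃ s, r = 7 * s + 4 := ⟨m - 1, by omega⟩
  -- B ≡ 7 (mod 49)
  have hmod : B = 49 * (816 + 5849 * s + 17479 * s ^ 2 + 27881 * s ^ 3 + 25039 * s ^ 4 +
      12005 * s ^ 5 + 2401 * s ^ 6) + 7 := by
    rw [hBdef]; ring
  -- but B = 7^k with k ≥ 2, so 49 ∣ B, contradiction
  have hk2 : 2 ≤ k := by
    by_contra h
    interval_cases k; omega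
  have h49 : 49 ∣ B := by
    rw [hBk]
    exact (show (49 : ℕ) = 7 ^ 2 by norm_num) ▸ pow_dvd_pow 7 hk2
  omega
end

section
/- Let G be a finite group, p a prime, and T an abelian subgroup of G. Let Y be the (unique) Sylow p-subgroup of T, and assume Y is nontrivial and cyclic. Suppose that for every element y ∈ Y of order p, the centralizer C_G(y) is contained in T. Then Y is a Sylow p-subgroup of G. -/
/-!
If `Y` is not Sylow in `G`, some `p`-subgroup `Q` properly contains it, and by the normalizer
condition in the nilpotent group `Q` some `x ∈ Q \ Y` normalizes `Y`. Conjugation by `x` acts on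
the cyclic group `Y` as a power map `z ↦ z ^ k`, and as `x ^ p ^ n = 1` we get `k ^ p ^ n ≡ 1`,
hence `k ≡ 1 (mod p)`: `x` centralizes the elements of order `p` of `Y`. So `x ∈ T`, and a
`p`-element of the abelian group `T` lies in its Sylow subgroup `Y`, a contradiction.
-/

open Subgroup

section

variable {G : Type*} [Group G] {p : ℕ} [Fact p.Prime]

theorem conj_pow_eq_zpow_pow {x z : G} {k : ℤ} (h : x * z * x⁻¹ = z ^ k) (j : ℕ) :
    x ^ j * z * (x ^ j)⁻¹ = z ^ k ^ j := by
  induction j with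
  | zero => simp
  | succ j ih =>
    rw [pow_succ', show x * x ^ j * z * (x * x ^ j)⁻¹ = x * (x ^ j * z * (x ^ j)⁻¹) * x⁻¹ by group,
      ih, ← conj_zpow, h, ← zpow_mul, ← pow_succ']

theorem commute_of_conj_eq_zpow {x z : G} {k : ℤ} {n : ℕ} (hx : x ^ p ^ n = 1)
    (hz : orderOf z = p) (h : x * z * x⁻¹ = z ^ k) : Commute x z := by
  have hk : z ^ k ^ p ^ n = z ^ k := by
    rw [zpow_eq_zpow_iff_modEq, hz, ← ZMod.intCast_eq_intCast_iff]
    push_cast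
    exact ZMod.pow_card_pow _
  have hconj : x * z * x⁻¹ = z := by
    rw [h, ← hk, ← conj_pow_eq_zpow_pow h, hx]
    group
  exact mul_inv_eq_iff_eq_mul.mp hconj

theorem exists_zpow_forall_conj_eq_of_mem_normalizer {H : Subgroup G} [IsCyclic H] {x : G}
    (hx : x ∈ normalizer (H : Set G)) : ∃ k : ℤ, ∀ z ∈ H, x * z * x⁻¹ = z ^ k := by
  let σ : H →* H := ((MulAut.conj x).toMonoidHom.comp H.subtype).codRestrict H
    fun h => (mem_normalizer_iff.mp hx h).mp h.2
  obtain ⟨k, hk⟩ := σ.map_cyclic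
  exact ⟨k, fun z hz => congrArg Subtype.val (hk ⟨z, hz⟩)⟩

theorem IsPGroup.exists_mem_orderOf_eq {H : Subgroup G} [Finite H] (hH : IsPGroup p H)
    (hne : H ≠ ⊥) : ∃ z ∈ H, orderOf z = p := by
  have : Nontrivial H := H.nontrivial_iff_ne_bot.mpr hne
  obtain ⟨z, hz⟩ := exists_prime_orderOf_dvd_card' p
    (hH.card_eq_or_dvd.resolve_left Finite.one_lt_card.ne')
  exact ⟨z, z.2, by rwa [orderOf_coe]⟩

theorem IsPGroup.exists_mem_normalizer_notMem {H Q : Subgroup G} [Finite Q]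
    (hQ : IsPGroup p Q) (hHQ : H < Q) : ∃ x ∈ Q, x ∈ normalizer (H : Set G) ∧ x ∉ H := by
  have := hQ.isNilpotent
  have hlt : H.subgroupOf Q < ⊤ :=
    lt_top_iff_ne_top.mpr fun h => hHQ.not_ge (subgroupOf_eq_top.mp h)
  obtain ⟨x, hxN, hxH⟩ := SetLike.exists_of_lt (Group.normalizerCondition_of_isNilpotent _ hlt)
  rw [← subgroupOf_normalizer_eq hHQ.le] at hxN
  exact ⟨x, x.2, hxN, hxH⟩

theorem commute_of_mem_normalizer_of_isCyclic {H : Subgroup G} [IsCyclic H] {x z : G} {n : ℕ}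
    (hx : x ∈ normalizer (H : Set G)) (hxp : x ^ p ^ n = 1) (hz : z ∈ H) (hzp : orderOf z = p) :
    Commute x z := by
  obtain ⟨k, hk⟩ := exists_zpow_forall_conj_eq_of_mem_normalizer hx
  exact commute_of_conj_eq_zpow hxp hzp (hk z hz)

end

theorem stmt_7 {G : Type*} [Group G] [Finite G] (p : ℕ) [Fact p.Prime]
    (T : Subgroup G) (hT : IsMulCommutative T) (Y : Sylow p T)
    (hYne : (Y : Subgroup T) ≠ ⊥) (hYcyc : IsCyclic (Y : Subgroup T))
    (hcent : ∀ y : G, y ∈ (Y : Subgroup T).map T.subtype → orderOf y = p →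
      Subgroup.centralizer {y} ≤ T) :
    ∀ Q : Subgroup G, IsPGroup p Q → (Y : Subgroup T).map T.subtype ≤ Q →
      Q = (Y : Subgroup T).map T.subtype := by
  intro Q hQ hle
  set Y' := (Y : Subgroup T).map T.subtype
  have : IsCyclic Y' :=
    ((Y : Subgroup T).equivMapOfInjective T.subtype T.subtype_injective).isCyclic.mp hYcyc
  refine (hle.eq_of_not_lt fun hlt => ?_).symm
  obtain ⟨x, hxQ, hxN, hxY⟩ := hQ.exists_mem_normalizer_notMem hlt
  obtain ⟨z, hzY, hzp⟩ := (Y.isPGroup'.map T.subtype).exists_mem_orderOf_eq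
    ((map_eq_bot_iff_of_injective _ T.subtype_injective).not.mpr hYne)
  obtain ⟨n, hxp⟩ := hQ ⟨x, hxQ⟩
  have hxz : Commute x z :=
    commute_of_mem_normalizer_of_isCyclic hxN (congrArg Subtype.val hxp) hzY hzp
  have hxT : x ∈ T := hcent z hzY hzp (mem_centralizer_singleton_iff.mpr hxz)
  -- `Q ∩ T` is a normal `p`-subgroup of the abelian group `T`, hence lies in its Sylow subgroup
  have hQT : Q.comap T.subtype ≤ Y := hQ.comap_subtype.le_sylow_of_normal Y
  exact hxY ⟨⟨x, hxT⟩, hQT hxQ, rfl⟩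
end

section
/- Let G be a finite group and S a nontrivial abelian subgroup of G such that C_G(y) = S for every non-identity element y ∈ S. Then S is a Hall subgroup of G, i.e., |S| is coprime to the index [G : S]. -/
/-!
Suppose a prime `p` divides both `|S|` and `[G : S]`. By Cauchy, `S` has an element `y` of order
`p`; let `P` be a Sylow `p`-subgroup of `G` containing it. A nontrivial `z` in the center of `P`
commutes with `y`, so `z ∈ C_G(y) = S`, and then `P ≤ C_G(z) = S`. Hence `[G : S]` divides
`[G : P]`, which is prime to `p`.
-/

open Subgroup

section

variable {G : Type*} [Group G]

theorem IsPGroup.exists_ne_one_le_centralizer {p : ℕ} [Fact p.Prime] {H : Subgroup G} [Finite H]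
    [Nontrivial H] (hH : IsPGroup p H) : ∃ z ≠ (1 : G), H ≤ centralizer {z} := by
  have := hH.center_nontrivial
  obtain ⟨z, hz⟩ := exists_ne (1 : center H)
  refine ⟨z, fun h => hz (Subtype.ext (Subtype.ext h)), fun h hh => ?_⟩
  rw [mem_centralizer_singleton_iff]
  exact congrArg Subtype.val (mem_center_iff.mp z.2 ⟨h, hh⟩)

theorem Subgroup.le_of_forall_centralizer_eq {S H : Subgroup G}
    (hcent : ∀ y : G, y ∈ S → y ≠ 1 → centralizer {y} = S) {y z : G} (hyS : y ∈ S) (hy : y ≠ 1)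
    (hyH : y ∈ H) (hz : z ≠ 1) (hHz : H ≤ centralizer {z}) : H ≤ S := by
  have hzS : z ∈ S := by
    rw [← hcent y hyS hy, mem_centralizer_singleton_iff]
    exact (mem_centralizer_singleton_iff.mp (hHz hyH)).symm
  exact hcent z hzS hz ▸ hHz

theorem Subgroup.exists_sylow_le_of_forall_centralizer_eq [Finite G] {S : Subgroup G}
    (hcent : ∀ y : G, y ∈ S → y ≠ 1 → centralizer {y} = S) {p : ℕ} [Fact p.Prime]
    (hp : p ∣ Nat.card S) : ∃ P : Sylow p G, (P : Subgroup G) ≤ S := by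
  obtain ⟨⟨y, hyS⟩, hyp⟩ := exists_prime_orderOf_dvd_card' p hp
  rw [orderOf_mk] at hyp
  have hy : y ≠ 1 := fun h => (Fact.out : p.Prime).one_lt.ne' (by rw [← hyp, h, orderOf_one])
  have hpy : IsPGroup p (zpowers y) :=
    IsPGroup.of_card (n := 1) (by rw [Nat.card_zpowers, hyp, pow_one])
  obtain ⟨P, hleP⟩ := hpy.exists_le_sylow
  have hyP : y ∈ (P : Subgroup G) := hleP (mem_zpowers y)
  have : Nontrivial (P : Subgroup G) := ⟨⟨y, hyP⟩, 1, by simpa⟩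
  obtain ⟨z, hz, hPz⟩ := P.isPGroup'.exists_ne_one_le_centralizer
  exact ⟨P, le_of_forall_centralizer_eq hcent hyS hy hyP hz hPz⟩

end

theorem stmt_8_general {G : Type*} [Group G] [Finite G] (S : Subgroup G)
    (hcent : ∀ y : G, y ∈ S → y ≠ 1 → Subgroup.centralizer {y} = S) :
    Nat.Coprime (Nat.card S) S.index := by
  refine Nat.coprime_of_dvd fun p hp hpS hpI => ?_
  have := Fact.mk hp
  obtain ⟨P, hPS⟩ := S.exists_sylow_le_of_forall_centralizer_eq hcent hpS
  exact P.not_dvd_index (hpI.trans (index_dvd_of_le hPS))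

theorem stmt_8 {G : Type*} [Group G] [Finite G] (S : Subgroup G)
    (hcomm : IsMulCommutative S) (hne : S ≠ ⊥)
    (hcent : ∀ y : G, y ∈ S → y ≠ 1 → Subgroup.centralizer {y} = S) :
    Nat.Coprime (Nat.card S) S.index :=
  stmt_8_general S hcent
end

section
/- Let q ≥ 4 and d ≥ 3 be integers and let j be an integer with 1 ≤ j ≤ d − 2. Then d · q^{(j−1)(2d−j)/2} · (q^d − 2q^j + 1) · (q − 1) ≥ (j + 1) · (q^d − 1) · (q^j − 1). -/
theorem stmt_15 (q d j : ℕ) (hq : 4 ≤ q) (hd : 3 ≤ d) (hj1 : 1 ≤ j) (hj2 : j ≤ d - 2) :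
    (j + 1) * (q ^ d - 1) * (q ^ j - 1) ≤
      d * q ^ ((j - 1) * (2 * d - j) / 2) * (q ^ d - 2 * q ^ j + 1) * (q - 1) := by
  have hdj : j + 2 ≤ d := by omega
  have hB1 : 1 ≤ q ^ j := Nat.one_le_pow _ _ (by omega)
  have h16 : 16 * q ^ j ≤ q ^ d := by
    have h16q : 16 ≤ q ^ 2 := by nlinarith [Nat.mul_le_mul hq hq]
    calc 16 * q ^ j ≤ q ^ 2 * q ^ j := Nat.mul_le_mul_right _ h16q
      _ ≤ q ^ (d - j) * q ^ j := by
          exact Nat.mul_le_mul_right _ (Nat.pow_le_pow_right (by omega) (by omega))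
      _ = q ^ d := by rw [← pow_add]; congr 1; omega
  rcases eq_or_lt_of_le hj1 with h1 | h2
  · -- j = 1
    subst h1
    have hE : (1 - 1) * (2 * d - 1) / 2 = 0 := by norm_num
    rw [hE, pow_zero, pow_one] at *
    have key : 2 * (q ^ d - 1) ≤ 3 * (q ^ d - 2 * q + 1) := by omega
    calc (1 + 1) * (q ^ d - 1) * (q - 1) ≤ 3 * (q ^ d - 2 * q + 1) * (q - 1) := by
          exact Nat.mul_le_mul_right _ (by omega)
      _ ≤ d * 1 * (q ^ d - 2 * q + 1) * (q - 1) := by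
          have : 3 * (q ^ d - 2 * q + 1) ≤ d * 1 * (q ^ d - 2 * q + 1) :=
            Nat.mul_le_mul_right _ (by omega)
          exact Nat.mul_le_mul_right _ this
  · -- j ≥ 2
    have hE : j ≤ (j - 1) * (2 * d - j) / 2 := by
      rw [Nat.le_div_iff_mul_le (by norm_num)]
      obtain ⟨k, hk⟩ : ∃ k, j = k + 1 := ⟨j - 1, by omega⟩
      subst hk
      have hm : k + 5 ≤ 2 * d - (k + 1) := by omega
      have h1k : 1 ≤ k := by omega
      calc (k + 1) * 2 ≤ k * (k + 5) := by nlinarith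
        _ ≤ (k + 1 - 1) * (2 * d - (k + 1)) := by
            simp only [Nat.add_sub_cancel]
            exact Nat.mul_le_mul_left _ hm
    have hqE : q ^ j ≤ q ^ ((j - 1) * (2 * d - j) / 2) :=
      Nat.pow_le_pow_right (by omega) hE
    set E := (j - 1) * (2 * d - j) / 2 with hEdef
    set A := q ^ d with hA
    set B := q ^ j with hBdef
    have key : (j + 1) * (A - 1) ≤ d * (3 * (A - 2 * B + 1)) :=
      Nat.mul_le_mul (by omega) (by omega)
    calc (j + 1) * (A - 1) * (B - 1) ≤ (j + 1) * (A - 1) * q ^ E :=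
          Nat.mul_le_mul_left _ (by omega)
      _ ≤ d * (3 * (A - 2 * B + 1)) * q ^ E := Nat.mul_le_mul_right _ key
      _ = d * q ^ E * (A - 2 * B + 1) * 3 := by ring
      _ ≤ d * q ^ E * (A - 2 * B + 1) * (q - 1) := Nat.mul_le_mul_left _ (by omega)
end

section
/- Let E be a finite group, χ the character of an irreducible complex representation of E with χ(1) > 1, and suppose χ(g) = 0 for every g ∈ E ∖ Z(E). Let A be an abelian subgroup of E with A ∩ Z(E) = {1}. Then |A| divides χ(1) and the restriction χ|_A equals (χ(1)/|A|) times the regular character of A; in particular the trivial character of A occurs in χ|_A. -/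
open scoped Classical

/-! Since `χ` vanishes off `Z(E)` and `A ∩ Z(E) = 1`, the restriction `χ|_A` is supported at `1`,
so `∑_{a ∈ A} χ(a) = χ(1)`. On the other hand this sum is `|A|` times the multiplicity of the
trivial character in `χ|_A`, a natural number `k`; hence `χ(1) = k |A|` and `χ|_A = k · ρ_A`,
and `k ≠ 0` because `χ(1) > 0`. -/

theorem Representation.sum_character_eq_finrank_invariants_mul_card {G k V : Type*} [Group G]
    [Fintype G] [Field k] [AddCommGroup V] [Module k V] [FiniteDimensional k V]
    [Invertible (Nat.card G : k)] (ρ : Representation k G V) :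
    ∑ g : G, ρ.character g = Module.finrank k (Representation.invariants ρ) * Nat.card G := by
  rw [← ρ.card_inv_mul_sum_char_eq_finrank, mul_comm, mul_inv_cancel_left₀]
  exact (isUnit_of_invertible _).ne_zero

section SupportDisjoint

variable {E M : Type*} [Group E] [AddCommMonoid M] {f : E → M} {A Z : Subgroup E}

theorem apply_eq_zero_of_mem_of_ne_one (hf : ∀ g ∉ Z, f g = 0) (hAZ : A ⊓ Z = ⊥) {a : E}
    (ha : a ∈ A) (ha1 : a ≠ 1) : f a = 0 := by
  refine hf a fun haZ => ha1 ?_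
  rw [← Subgroup.mem_bot, ← hAZ]
  exact ⟨ha, haZ⟩

theorem sum_subgroup_eq_apply_one [Fintype A] (hf : ∀ g ∉ Z, f g = 0) (hAZ : A ⊓ Z = ⊥) :
    ∑ a : A, f a = f 1 := by
  rw [Fintype.sum_eq_single 1 fun a ha =>
    apply_eq_zero_of_mem_of_ne_one hf hAZ a.2 (by simpa using ha)]
  rfl

end SupportDisjoint

theorem stmt_16_general {E : Type} [Group E] [Fintype E] (V : FDRep ℂ E)
    (hdeg : 1 < Module.finrank ℂ V)
    (hvanish : ∀ g : E, g ∉ Subgroup.center E → V.character g = 0)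
    (A : Subgroup E) (hAZ : A ⊓ Subgroup.center E = ⊥) :
    (∃ k : ℕ, V.character 1 = (k : ℂ) * (Nat.card A : ℂ) ∧
        ∀ a : A, V.character (a : E)
          = (k : ℂ) * (if (a : E) = 1 then (Nat.card A : ℂ) else 0)) ∧
      ∑ a : A, V.character (a : E) ≠ 0 := by
  have : Invertible (Nat.card A : ℂ) := invertibleOfNonzero (by simp)
  have hsum_one : ∑ a : A, V.character (a : E) = V.character 1 :=
    sum_subgroup_eq_apply_one hvanish hAZ
  have hsum_invariants :=
    Representation.sum_character_eq_finrank_invariants_mul_card (V.ρ.comp A.subtype)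
  have hone : V.character 1 = _ := hsum_one.symm.trans hsum_invariants
  refine ⟨⟨_, hone, fun a => ?_⟩, ?_⟩
  · split_ifs with ha
    · rw [ha, hone]
    · rw [apply_eq_zero_of_mem_of_ne_one hvanish hAZ a.2 ha, mul_zero]
  · rw [hsum_one, FDRep.char_one]
    exact_mod_cast (by omega : Module.finrank ℂ V ≠ 0)

/-- Hall–Higman–Shult type, Lemma `eg1`: if `χ` is an irreducible complex
character of a finite group `E` of degree `> 1` vanishing outside the center, and `A` is
an abelian subgroup with `A ∩ Z(E) = 1`, then `χ|_A` is `(χ(1)/|A|)` times the regular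
character of `A`; in particular `|A| ∣ χ(1)` and `1_A` occurs in `χ|_A`. -/
theorem stmt_16 {E : Type} [Group E] [Fintype E] (V : FDRep ℂ E)
    (hsimple : CategoryTheory.Simple V) (hdeg : 1 < Module.finrank ℂ V)
    (hvanish : ∀ g : E, g ∉ Subgroup.center E → V.character g = 0)
    (A : Subgroup E) (hA : IsMulCommutative A) (hAZ : A ⊓ Subgroup.center E = ⊥) :
    (∃ k : ℕ, V.character 1 = (k : ℂ) * (Nat.card A : ℂ) ∧
        ∀ a : A, V.character (a : E)
          = (k : ℂ) * (if (a : E) = 1 then (Nat.card A : ℂ) else 0)) ∧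
      ∑ a : A, V.character (a : E) ≠ 0 :=
  stmt_16_general V hdeg hvanish A hAZ
end
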